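/- arXiv:2204.04296 — 9 statements merged into one kernel-verified Lean document; each statement's English description precedes it below -/
import Mathlib

section
/- Let q = 2^n for a positive integer n and let d = q^3 + q^2 + q - 1. Then gcd(d, q^4 - 1) = 1. -/
/-!
With `d = q³ + q² + q - 1` one has `q⁴ - 1 = (q - 1) d + 2 (q - 1)` and `d = (q - 1)(q² + 2q + 3) + 2`.
So a common divisor of `d` and `q⁴ - 1` divides `2 (q - 1)`, hence (`d` being odd) `q - 1`, hence `2`;
as `d` is odd it is a unit.
-/

theorem isCoprime_two_sub_one {R : Type*} [CommRing R] {x : R} (hx : Even x) :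
    IsCoprime 2 (x - 1) := by
  obtain ⟨k, rfl⟩ := hx
  exact ⟨k, -1, by ring⟩

theorem isCoprime_cubic_quartic_of_even {R : Type*} [CommRing R] {q : R} (hq : Even q) :
    IsCoprime (q ^ 3 + q ^ 2 + q - 1) (q ^ 4 - 1) := by
  set d := q ^ 3 + q ^ 2 + q - 1
  have hd_odd : IsCoprime 2 d := isCoprime_two_sub_one <|
    ((hq.pow_of_ne_zero three_ne_zero).add (hq.pow_of_ne_zero two_ne_zero)).add hq
  have hd_sub_one : IsCoprime d (q - 1) := by
    have hd : d = 2 + (q - 1) * (q ^ 2 + 2 * q + 3) := by ring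
    rw [hd]
    exact (isCoprime_two_sub_one hq).add_mul_left_left _
  have hq4 : q ^ 4 - 1 = 2 * (q - 1) + d * (q - 1) := by ring
  rw [hq4]
  exact (hd_odd.symm.mul_right hd_sub_one).add_mul_left_right _

theorem gcd_d_q4_sub_one (n : ℕ) (hn : 0 < n) :
    Nat.gcd ((2^n)^3 + (2^n)^2 + 2^n - 1) ((2^n)^4 - 1) = 1 := by
  have hq : 1 ≤ 2 ^ n := Nat.one_le_two_pow
  have hd : 1 ≤ (2 ^ n) ^ 3 + (2 ^ n) ^ 2 + 2 ^ n := by omega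
  have hq4 : 1 ≤ (2 ^ n) ^ 4 := Nat.one_le_pow _ _ hq
  rw [← Nat.coprime_iff_gcd_eq_one, ← Nat.isCoprime_iff_coprime]
  push_cast [Nat.cast_sub hd, Nat.cast_sub hq4]
  exact isCoprime_cubic_quartic_of_even (even_two.pow_of_ne_zero hn.ne')
end

section
/- Let m be a positive integer and z a nonzero element of GF(2^m). If Tr(1/z) = 0 (absolute trace from GF(2^m) to GF(2)), then there exists c ∈ GF(2^m) \ GF(2) with z = c + 1/c; if Tr(1/z) = 1, then there exists c in the subgroup of (2^m+1)-st roots of unity in GF(2^{2m}) with c ≠ 1 and z = c + 1/c. Moreover in each case exactly two such c exist (c and 1/c). -/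
open Finset

lemma card_pow_eq_one_eq (L : Type) [Field L] [Fintype L] [DecidableEq L] {n : ℕ} (hn : 0 < n)
    (hd : n ∣ Fintype.card L - 1) :
    (Finset.univ.filter fun x : L => x ^ n = 1).card = n := by
  obtain ⟨g, hg⟩ := IsCyclic.exists_generator (α := Lˣ)
  have hN : orderOf g = Fintype.card L - 1 := by
    rw [orderOf_eq_card_of_forall_mem_zpowers hg, Nat.card_eq_fintype_card, Fintype.card_units]
  obtain ⟨k, hk⟩ := hd
  have hNpos : 0 < Fintype.card L - 1 := by
    have := Fintype.one_lt_card (α := L)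
    omega
  have hkpos : 0 < k := by
    rcases Nat.eq_zero_or_pos k with h | h
    · simp [h] at hk; omega
    · exact h
  have ha : orderOf (g ^ k) = n := by
    rw [orderOf_pow, hN, hk, Nat.gcd_eq_right ⟨n, by ring⟩]
    rw [mul_comm]; exact Nat.mul_div_cancel_left n hkpos
  have hprim : IsPrimitiveRoot ((g ^ k : Lˣ) : L) n := by
    rw [IsPrimitiveRoot.coe_units_iff, ← ha]
    exact IsPrimitiveRoot.orderOf _
  have : (Finset.univ.filter fun x : L => x ^ n = 1) = Polynomial.nthRootsFinset n (1 : L) := by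
    ext x
    simp [Polynomial.mem_nthRootsFinset hn (1 : L)]
  rw [this, hprim.card_nthRootsFinset]

lemma char_two_of_card (m : ℕ) (hm : 0 < m) (L : Type) [Field L] [Fintype L]
    (hL : Fintype.card L = 2^(2*m)) : CharP L 2 := by
  obtain ⟨p, hp⟩ := CharP.exists L
  have hprime : p.Prime := CharP.char_is_prime L p
  obtain ⟨n, hn⟩ := FiniteField.card L p
  have hpn : p ^ (n : ℕ) = 2 ^ (2*m) := by rw [← hn.2, hL]
  have hp2 : p = 2 := by
    have hdvd : p ∣ 2 ^ (2*m) := by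
      rw [← hpn]; exact dvd_pow_self p n.pos.ne'
    have := hprime.dvd_of_dvd_pow hdvd
    exact (Nat.prime_dvd_prime_iff_eq hprime Nat.prime_two).mp this
  rwa [hp2] at hp

lemma eq_one_of_sq_eq_one (L : Type) [Field L] [CharP L 2] {c : L} (h : c ^ 2 = 1) : c = 1 := by
  have h2 : (2 : L) = 0 := CharP.cast_eq_zero L 2
  have hsq : (c + 1) ^ 2 = 0 := by linear_combination h + (c + 1) * h2
  have := pow_eq_zero_iff (n := 2) (by norm_num) |>.mp hsq
  linear_combination this - h2

lemma quadratic_two_roots (L : Type) [Field L] [CharP L 2] {c c₀ : L} (hc : c ≠ 0) (hc₀ : c₀ ≠ 0)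
    (he : c + c⁻¹ = c₀ + c₀⁻¹) : c = c₀ ∨ c = c₀⁻¹ := by
  have h2 : (2 : L) = 0 := CharP.cast_eq_zero L 2
  have h1 : c * c⁻¹ = 1 := mul_inv_cancel₀ hc
  have h0 : c₀ * c₀⁻¹ = 1 := mul_inv_cancel₀ hc₀
  have key : (c - c₀) * (c - c₀⁻¹) = 0 := by
    linear_combination h0 - c * he + h1 + (c^2 - c*c₀⁻¹ - c*c₀ + 1) * h2
  rcases mul_eq_zero.mp key with h | h
  · exact Or.inl (sub_eq_zero.mp h)
  · exact Or.inr (sub_eq_zero.mp h)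

lemma psi_ne_zero (L : Type) [Field L] [CharP L 2] {c : L} (hc0 : c ≠ 0) (hc1 : c ≠ 1) :
    c + c⁻¹ ≠ 0 := by
  intro h
  have h1 : c * c⁻¹ = 1 := mul_inv_cancel₀ hc0
  have h2 : (2 : L) = 0 := CharP.cast_eq_zero L 2
  apply hc1
  apply eq_one_of_sq_eq_one L
  linear_combination c * h - h1 - h2

lemma trace_formula (L : Type) [Field L] [CharP L 2] (m : ℕ) (c : L)
    (hc0 : c ≠ 0) (hc1 : c ≠ 1) :
    ∑ i ∈ Finset.range m, ((c + c⁻¹)⁻¹) ^ (2^i)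
      = (c+1)⁻¹ + ((c+1)⁻¹) ^ (2^m) := by
  have h2 : (2 : L) = 0 := CharP.cast_eq_zero L 2
  have h1 : c * c⁻¹ = 1 := mul_inv_cancel₀ hc0
  have hcc1 : c + 1 ≠ 0 := fun h => hc1 (by linear_combination h - h2)
  have hz0 : c + c⁻¹ ≠ 0 := by
    intro h
    have hsq : (c + 1) ^ 2 = 0 := by linear_combination c * h - h1 + c * h2
    exact hcc1 (by simpa using pow_eq_zero_iff (n := 2) (by norm_num) |>.mp hsq)
  set t := (c + 1)⁻¹ with ht
  have key : (c + c⁻¹)⁻¹ = t + t ^ 2 := by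
    rw [eq_comm]
    apply eq_inv_of_mul_eq_one_left
    rw [ht]
    field_simp
    linear_combination h2
  have hterm : ∀ i, ((c + c⁻¹)⁻¹) ^ (2^i) = t ^ (2^(i+1)) - t ^ (2^i) := by
    intro i
    rw [key, CharTwo.sub_eq_add, add_pow_char_pow, ← pow_mul, mul_comm, ← pow_succ, add_comm]
  rw [Finset.sum_congr rfl fun i _ => hterm i, Finset.sum_range_sub (fun j => t ^ (2^j)),
    CharTwo.sub_eq_add, pow_zero, pow_one, add_comm]

lemma trace_zero_of_subfield (L : Type) [Field L] [CharP L 2] (m : ℕ) (c : L)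
    (hc0 : c ≠ 0) (hc1 : c ≠ 1) (hcF : c ^ (2^m) = c) :
    ∑ i ∈ Finset.range m, ((c + c⁻¹)⁻¹) ^ (2^i) = 0 := by
  rw [trace_formula L m c hc0 hc1, inv_pow, add_pow_char_pow, one_pow, hcF,
    CharTwo.add_self_eq_zero]

lemma trace_one_of_unitary (L : Type) [Field L] [CharP L 2] (m : ℕ) (c : L)
    (hc1 : c ≠ 1) (hcU : c ^ (2^m + 1) = 1) :
    ∑ i ∈ Finset.range m, ((c + c⁻¹)⁻¹) ^ (2^i) = 1 := by
  have h2 : (2 : L) = 0 := CharP.cast_eq_zero L 2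
  have hc0 : c ≠ 0 := by
    intro h; rw [h, zero_pow (by positivity)] at hcU; exact zero_ne_one hcU
  have hcinv : c ^ (2^m) = c⁻¹ := by
    field_simp
    rw [← pow_succ]
    exact hcU
  have hcc1 : c + 1 ≠ 0 := fun h => hc1 (by linear_combination h - h2)
  have hcic1 : c⁻¹ + 1 ≠ 0 := by
    intro h
    have h1 : c * c⁻¹ = 1 := mul_inv_cancel₀ hc0
    exact hcc1 (by linear_combination c * h - h1)
  have hcc1' : 1 + c ≠ 0 := by rwa [add_comm]
  have final : (c+1)⁻¹ + (c⁻¹+1)⁻¹ = 1 := by field_simp; ring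
  rw [trace_formula L m c hc0 hc1, inv_pow, add_pow_char_pow, one_pow, hcinv, final]

lemma exists_decomp (m : ℕ) (hm : 0 < m) (L : Type) [Field L] [Fintype L] [DecidableEq L]
    [CharP L 2] (hL : Fintype.card L = 2^(2*m)) (z : L) (hz : z ^ (2^m) = z) (hz0 : z ≠ 0) :
    ∃ c : L, c ≠ 0 ∧ c ≠ 1 ∧ (c ^ (2^m) = c ∨ c ^ (2^m + 1) = 1) ∧ z = c + c⁻¹ := by
  have h2 : (2 : L) = 0 := CharP.cast_eq_zero L 2
  set q := 2^m with hq
  have hq1 : 2 ≤ q := by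
    calc 2 = 2^1 := (pow_one 2).symm
    _ ≤ 2^m := Nat.pow_le_pow_right (by norm_num) hm
  have hcard : Fintype.card L = q^2 := by rw [hL, hq, ← pow_mul, mul_comm]
  have frob : ∀ x y : L, (x + y) ^ q = x ^ q + y ^ q := fun x y => add_pow_char_pow x y 2 m
  have hfacts : q^2 - 1 = (q-1)*(q+1) := by
    have h1 : 1 ≤ q := by omega
    have h2 : 1 ≤ q^2 := Nat.one_le_two_pow.trans (by gcongr <;> omega)
    zify [h1, h2]
    ring
  set A : Finset L := univ.filter (fun c => c ^ q = c ∧ c ≠ 0 ∧ c ≠ 1) with hA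
  set B : Finset L := univ.filter (fun c => c ^ (q+1) = 1 ∧ c ≠ 1) with hB
  set F' : Finset L := univ.filter (fun x => x ^ q = x ∧ x ≠ 0) with hF'
  have cardUm : (univ.filter fun x : L => x ^ (q-1) = 1).card = q - 1 :=
    card_pow_eq_one_eq L (by omega) (by rw [hcard, hfacts]; exact Dvd.intro _ rfl)
  have cardUp : (univ.filter fun x : L => x ^ (q+1) = 1).card = q + 1 :=
    card_pow_eq_one_eq L (by omega) (by rw [hcard, hfacts]; exact Dvd.intro_left _ rfl)
  have memF_iff : ∀ x : L, x ^ q = x ↔ (x = 0 ∨ x ^ (q-1) = 1) := by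
    intro x
    constructor
    · intro h
      rcases eq_or_ne x 0 with h0 | h0
      · exact Or.inl h0
      · refine Or.inr (mul_right_cancel₀ h0 ?_)
        rw [one_mul, ← pow_succ]
        have : q - 1 + 1 = q := by omega
        rw [this, h]
    · rintro (rfl | h)
      · exact zero_pow (by omega)
      · have : q - 1 + 1 = q := by omega
        rw [← this, pow_succ, h, one_mul]
  have hF'eq : F' = univ.filter (fun x : L => x ^ (q-1) = 1) := by
    ext x
    simp only [hF', mem_filter, mem_univ, true_and]
    constructor
    · rintro ⟨h, h0⟩
      rcases (memF_iff x).mp h with h' | h'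
      · exact absurd h' h0
      · exact h'
    · intro h
      have h0 : x ≠ 0 := by
        intro h0; rw [h0, zero_pow (by omega : q - 1 ≠ 0)] at h; exact zero_ne_one h
      exact ⟨(memF_iff x).mpr (Or.inr h), h0⟩
  have cardF' : F'.card = q - 1 := by rw [hF'eq, cardUm]
  have cardA : A.card = q - 2 := by
    have hAeq : A = F'.erase 1 := by
      ext x
      simp only [hA, hF', mem_filter, mem_univ, true_and, mem_erase]
      tauto
    have h1F : (1:L) ∈ F' := by
      simp only [hF', mem_filter, mem_univ, true_and]
      exact ⟨one_pow q, one_ne_zero⟩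
    rw [hAeq, card_erase_of_mem h1F, cardF']
    omega
  have cardB : B.card = q := by
    have hBeq : B = (univ.filter fun x : L => x ^ (q+1) = 1).erase 1 := by
      ext x
      simp only [hB, mem_filter, mem_univ, true_and, mem_erase]
      tauto
    have h1U : (1:L) ∈ (univ.filter fun x : L => x ^ (q+1) = 1) := by
      simp
    rw [hBeq, card_erase_of_mem h1U, cardUp]
    omega
  have hdisj : Disjoint A B := by
    rw [Finset.disjoint_left]
    intro c hcA hcB
    simp only [hA, hB, mem_filter, mem_univ, true_and] at hcA hcB
    obtain ⟨hcq, hc0, hc1⟩ := hcA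
    obtain ⟨hcq1, -⟩ := hcB
    apply hc1
    apply eq_one_of_sq_eq_one L
    calc c^2 = c^q * c := by rw [hcq, sq]
    _ = c^(q+1) := by rw [pow_succ]
    _ = 1 := hcq1
  set S : Finset L := A ∪ B with hS
  have cardS : S.card = 2 * (q - 1) := by
    rw [hS, card_union_of_disjoint hdisj, cardA, cardB]; omega
  have memS : ∀ c ∈ S, c ≠ 0 ∧ c ≠ 1 ∧ (c ^ q = c ∨ c ^ (q+1) = 1) := by
    intro c hc
    rw [hS, mem_union] at hc
    rcases hc with hc | hc
    · simp only [hA, mem_filter, mem_univ, true_and] at hc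
      exact ⟨hc.2.1, hc.2.2, Or.inl hc.1⟩
    · simp only [hB, mem_filter, mem_univ, true_and] at hc
      refine ⟨?_, hc.2, Or.inr hc.1⟩
      intro h0
      rw [h0, zero_pow (by omega : q + 1 ≠ 0)] at hc
      exact zero_ne_one hc.1
  have invS : ∀ c ∈ S, c⁻¹ ∈ S := by
    intro c hc
    obtain ⟨hc0, hc1, -⟩ := memS c hc
    rw [hS, mem_union] at hc ⊢
    rcases hc with hc | hc
    · left
      simp only [hA, mem_filter, mem_univ, true_and] at hc ⊢
      exact ⟨by rw [inv_pow, hc.1], inv_ne_zero hc.2.1, fun h => hc.2.2 (inv_eq_one.mp h)⟩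
    · right
      simp only [hB, mem_filter, mem_univ, true_and] at hc ⊢
      exact ⟨by rw [inv_pow, hc.1, inv_one], fun h => hc.2 (inv_eq_one.mp h)⟩
  set T : Finset L := S.image (fun c => c + c⁻¹) with hT
  have hTsub : T ⊆ F' := by
    intro y hy
    rw [hT, mem_image] at hy
    obtain ⟨c, hcS, rfl⟩ := hy
    obtain ⟨hc0, hc1, hcase⟩ := memS c hcS
    simp only [hF', mem_filter, mem_univ, true_and]
    refine ⟨?_, psi_ne_zero L hc0 hc1⟩
    rcases hcase with h | h
    · rw [frob, inv_pow, h]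
    · have hcq : c ^ q = c⁻¹ := by
        field_simp
        rw [← pow_succ]
        exact h
      rw [frob, inv_pow, hcq, inv_inv, add_comm]
  have hfiber : ∀ y ∈ T, (S.filter fun c => c + c⁻¹ = y).card = 2 := by
    intro y hy
    rw [hT, mem_image] at hy
    obtain ⟨c₀, hc₀S, rfl⟩ := hy
    obtain ⟨hc00, hc01, -⟩ := memS c₀ hc₀S
    have hpair : (S.filter fun c => c + c⁻¹ = c₀ + c₀⁻¹) = {c₀, c₀⁻¹} := by
      ext c
      simp only [mem_filter, mem_insert, mem_singleton]
      constructor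
      · rintro ⟨hcS, he⟩
        exact quadratic_two_roots L (memS c hcS).1 hc00 he
      · rintro (rfl | rfl)
        · exact ⟨hc₀S, rfl⟩
        · exact ⟨invS c₀ hc₀S, by rw [inv_inv, add_comm]⟩
    rw [hpair]
    rw [card_insert_of_notMem, card_singleton]
    simp only [mem_singleton]
    intro h
    apply hc01
    apply eq_one_of_sq_eq_one L
    rw [sq]
    nth_rewrite 2 [h]
    exact mul_inv_cancel₀ hc00
  have hcount : S.card = 2 * T.card := by
    rw [Finset.card_eq_sum_card_image (fun c => c + c⁻¹) S]
    rw [← hT, Finset.sum_congr rfl hfiber, Finset.sum_const, smul_eq_mul, mul_comm]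
  have cardT : T.card = q - 1 := by omega
  have hTeq : T = F' := Finset.eq_of_subset_of_card_le hTsub (by omega)
  have hzF' : z ∈ F' := by
    simp only [hF', mem_filter, mem_univ, true_and]
    exact ⟨hz, hz0⟩
  rw [← hTeq, hT, mem_image] at hzF'
  obtain ⟨c, hcS, hce⟩ := hzF'
  obtain ⟨hc0, hc1, hcase⟩ := memS c hcS
  exact ⟨c, hc0, hc1, hcase, hce.symm⟩

theorem decomposition_c_plus_inv (m : ℕ) (hm : 0 < m) (L : Type) [Field L] [Fintype L]
    (hL : Fintype.card L = 2^(2*m)) (z : L) (hz : z ^ (2^m) = z) (hz0 : z ≠ 0) :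
    ((∑ i ∈ Finset.range m, (z⁻¹) ^ (2^i) = 0 →
        (∃ c : L, c ^ (2^m) = c ∧ c ≠ 0 ∧ c ≠ 1 ∧ z = c + c⁻¹) ∧
        {c : L | c ^ (2^m) = c ∧ c ≠ 0 ∧ c ≠ 1 ∧ z = c + c⁻¹}.ncard = 2) ∧
     (∑ i ∈ Finset.range m, (z⁻¹) ^ (2^i) = 1 →
        (∃ c : L, c ^ (2^m + 1) = 1 ∧ c ≠ 1 ∧ z = c + c⁻¹) ∧
        {c : L | c ^ (2^m + 1) = 1 ∧ c ≠ 1 ∧ z = c + c⁻¹}.ncard = 2)) := by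
  classical
  haveI : CharP L 2 := char_two_of_card m hm L hL
  obtain ⟨c, hc0, hc1, hcase, hce⟩ := exists_decomp m hm L hL z hz hz0
  have hne : c ≠ c⁻¹ := by
    intro h
    apply hc1
    apply eq_one_of_sq_eq_one L
    rw [sq]
    nth_rewrite 2 [h]
    exact mul_inv_cancel₀ hc0
  constructor
  · intro htr
    rw [hce] at htr
    have hcF : c ^ (2^m) = c := by
      rcases hcase with h | h
      · exact h
      · exact absurd ((trace_one_of_unitary L m c hc1 h).symm.trans htr) one_ne_zero
    have hset : {c' : L | c' ^ (2^m) = c' ∧ c' ≠ 0 ∧ c' ≠ 1 ∧ z = c' + c'⁻¹} = {c, c⁻¹} := by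
      ext x
      simp only [Set.mem_setOf_eq, Set.mem_insert_iff, Set.mem_singleton_iff]
      constructor
      · rintro ⟨hxF, hx0, hx1, hxe⟩
        exact quadratic_two_roots L hx0 hc0 (hxe.symm.trans hce)
      · rintro (rfl | rfl)
        · exact ⟨hcF, hc0, hc1, hce⟩
        · refine ⟨by rw [inv_pow, hcF], inv_ne_zero hc0, fun h => hc1 (inv_eq_one.mp h), ?_⟩
          rw [inv_inv, hce]
          exact add_comm c c⁻¹
    exact ⟨⟨c, hcF, hc0, hc1, hce⟩, by rw [hset, Set.ncard_pair hne]⟩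
  · intro htr
    rw [hce] at htr
    have hcU : c ^ (2^m + 1) = 1 := by
      rcases hcase with h | h
      · exact absurd ((trace_zero_of_subfield L m c hc0 hc1 h).symm.trans htr) zero_ne_one
      · exact h
    have hset : {c' : L | c' ^ (2^m + 1) = 1 ∧ c' ≠ 1 ∧ z = c' + c'⁻¹} = {c, c⁻¹} := by
      ext x
      simp only [Set.mem_setOf_eq, Set.mem_insert_iff, Set.mem_singleton_iff]
      constructor
      · rintro ⟨hxU, hx1, hxe⟩
        have hx0 : x ≠ 0 := by
          intro h; rw [h, zero_pow (by positivity)] at hxU; exact zero_ne_one hxU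
        exact quadratic_two_roots L hx0 hc0 (hxe.symm.trans hce)
      · rintro (rfl | rfl)
        · exact ⟨hcU, hc1, hce⟩
        · refine ⟨by rw [inv_pow, hcU, inv_one], fun h => hc1 (inv_eq_one.mp h), ?_⟩
          rw [inv_inv, hce]
          exact add_comm c c⁻¹
    exact ⟨⟨c, hcU, hc1, hce⟩, by rw [hset, Set.ncard_pair hne]⟩
end

section
/- Let q = 2^n, F = GF(q^4), and d = q^3 + q^2 + q - 1. The set of x ∈ F satisfying x^d + (x+1)^d = 1 is exactly the subfield GF(q^2) of F. -/
/-! Let φ be the Frobenius y ↦ y ^ q, so that φ⁴ = id on F, and put a = φ x, b = φ² x, c = φ³ x.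
Since d + 1 = q + q² + q³, multiplying the equation by x (x + 1) turns it into
(x + 1) a b c + x (a + 1) (b + 1) (c + 1) = x (x + 1), which in characteristic 2 reads
σ₃ + x σ₁ = 0 for the elementary symmetric functions σᵢ of x, a, b, c. These are φ-invariant, so
applying φ gives σ₃ + a σ₁ = 0 and hence (x + a) σ₁ = 0. Either a = x, or σ₁ = σ₃ = 0 and then
(x + a) (x + b) (x + c) = x² σ₁ + σ₃ = 0; in every case φ² x = x. Conversely φ² x = x forces
c = a, and then σ₁ = σ₃ = 0. -/

namespace CharTwo

variable {R : Type*} [CommRing R] [IsDomain R] [CharP R 2]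

theorem eq_or_eq_or_eq_of_esymm {x a b c : R}
    (hx : a * b * c + x * (a * b + b * c + c * a) + x * (x + a + b + c) = 0)
    (ha : a * b * c + x * (a * b + b * c + c * a) + a * (x + a + b + c) = 0) :
    a = x ∨ b = x ∨ c = x := by
  have hσ : (a + x) * (x + a + b + c) = 0 := by
    linear_combination ha - hx + x * (x + a + b + c) * two_eq_zero (R := R)
  rcases mul_eq_zero.mp hσ with h | hσ₁
  · exact Or.inl (CharTwo.add_eq_zero.mp h)
  · have : (a + x) * (b + x) * (c + x) = 0 := by
      linear_combination hx + (x ^ 2 - x) * hσ₁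
    simpa only [mul_eq_zero, CharTwo.add_eq_zero, or_assoc] using this

theorem mul_add_mul_eq_mul_iff_map_map_eq (φ : R →+* R) (hφ : ∀ y, φ (φ (φ (φ y))) = y) (x : R) :
    (x + 1) * (φ x * φ (φ x) * φ (φ (φ x))) +
        x * (φ (x + 1) * φ (φ (x + 1)) * φ (φ (φ (x + 1)))) = x * (x + 1) ↔
      φ (φ x) = x := by
  simp only [map_add, map_one]
  set a := φ x with ha
  set b := φ a with hb
  set c := φ b with hc
  have hcx : φ c = x := hφ x
  rw [← sub_eq_zero]
  have hexpand : (x + 1) * (a * b * c) + x * ((a + 1) * (b + 1) * (c + 1)) - x * (x + 1) =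
      a * b * c + x * (a * b + b * c + c * a) + x * (x + a + b + c) := by
    linear_combination (x * a * b * c - x ^ 2) * two_eq_zero (R := R)
  rw [hexpand]
  constructor
  · intro hx
    have hφx := congrArg φ hx
    simp only [map_add, map_mul, map_zero, hcx, ← ha, ← hb, ← hc] at hφx
    rcases eq_or_eq_or_eq_of_esymm hx (by linear_combination hφx) with h | h | h
    · rw [hb, h, ← ha, h]
    · exact h
    · have hax : a = x := by rw [← hcx, h]
      rw [hb, hax, ← ha, hax]
  · intro hbx
    have hca : c = a := by rw [hc, hbx]
    rw [hbx, hca]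
    linear_combination (x * a ^ 2 + x ^ 2 * a + x * a + x ^ 2) * two_eq_zero (R := R)

theorem pow_add_add_one_pow_eq_one_iff {d : ℕ} (hd : d ≠ 0) (x : R) :
    x ^ d + (x + 1) ^ d = 1 ↔ (x + 1) * x ^ (d + 1) + x * (x + 1) ^ (d + 1) = x * (x + 1) := by
  rcases eq_or_ne (x * (x + 1)) 0 with h0 | h0
  · rcases mul_eq_zero.mp h0 with hx | hx
    · simp [hx, hd]
    · simp [CharTwo.add_eq_zero.mp hx, hd, CharTwo.add_self_eq_zero]
  · rw [← mul_left_inj' h0, one_mul]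
    ring_nf

end CharTwo

theorem solutions_b_eq_one_general (n : ℕ) (F : Type) [Field F] [Fintype F]
    (hF : Fintype.card F = (2^n)^4) :
    {x : F | x ^ ((2^n)^3 + (2^n)^2 + 2^n - 1) + (x + 1) ^ ((2^n)^3 + (2^n)^2 + 2^n - 1) = 1}
      = {x : F | x ^ ((2^n)^2) = x} := by
  have : CharP F 2 := charP_of_card_eq_prime_pow (hF.trans (pow_mul 2 n 4).symm)
  set φ := iterateFrobenius F 2 n
  have hφ (y : F) : φ (φ (φ (φ y))) = y := calc
    _ = y ^ (2 ^ n) ^ 4 := by simp only [φ, iterateFrobenius_def, ← pow_mul]; ring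
    _ = y := hF ▸ FiniteField.pow_card y
  have hq : 1 ≤ 2 ^ n := Nat.one_le_two_pow
  have hq₂ : 1 ≤ (2 ^ n) ^ 2 := Nat.one_le_pow _ _ (by positivity)
  have hd : (2^n)^3 + (2^n)^2 + 2^n - 1 + 1 = (2^n)^3 + (2^n)^2 + 2^n := by omega
  have hnorm (y : F) : y ^ ((2^n)^3 + (2^n)^2 + 2^n) = φ y * φ (φ y) * φ (φ (φ y)) := by
    simp only [φ, iterateFrobenius_def, ← pow_mul]; ring
  ext x
  rw [Set.mem_ofPred_eq, Set.mem_ofPred_eq, CharTwo.pow_add_add_one_pow_eq_one_iff (by omega), hd,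
    hnorm, hnorm, CharTwo.mul_add_mul_eq_mul_iff_map_map_eq φ hφ]
  simp only [φ, iterateFrobenius_def, ← pow_mul, sq]

theorem solutions_b_eq_one (n : ℕ) (hn : 0 < n) (F : Type) [Field F] [Fintype F]
    (hF : Fintype.card F = (2^n)^4) :
    {x : F | x ^ ((2^n)^3 + (2^n)^2 + 2^n - 1) + (x + 1) ^ ((2^n)^3 + (2^n)^2 + 2^n - 1) = 1}
      = {x : F | x ^ ((2^n)^2) = x} :=
  solutions_b_eq_one_general n F hF
end

section
/- Let q = 2^n and F = GF(q^4). Then (1 + μ_{(q-1)(q^2+1)}) ∩ μ_{(q-1)(q^2+1)} = GF(q) \ GF(2), where μ_m denotes the m-th roots of unity in F. That is, y and 1+y are both (q-1)(q^2+1)-st roots of unity in F if and only if y ∈ GF(q) and y ∉ {0,1}. -/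
/-!
Write `q = 2 ^ n`; the field has characteristic `2`. For `x ≠ 0`, `x ^ ((q - 1) * (q ^ 2 + 1)) = 1`
says that `N x = x ^ (q ^ 2 + 1)`, the norm of `x` to the subfield with `q ^ 2` elements, is fixed
by `x ↦ x ^ q`. Since `N (1 + y) = 1 + (y + y ^ (q ^ 2)) + N y`, both norms are fixed exactly when the
trace `a = y + y ^ (q ^ 2)` and `b = N y` are, and then `y` is a root of `X ^ 2 + a X + b`, whose
coefficients are fixed by `x ↦ x ^ q`. Its other root is `y + a`, so `y ^ q ∈ {y, y + a}`, whence
`y ^ (q ^ 2) = y`, i.e. `a = 0`, and finally `y ^ q = y`.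
-/

lemma pow_sub_one_mul_eq_one_iff {G₀ : Type*} [GroupWithZero G₀] {q k : ℕ} (hq : 1 < q)
    (hk : k ≠ 0) (x : G₀) : x ^ ((q - 1) * k) = 1 ↔ x ≠ 0 ∧ (x ^ k) ^ q = x ^ k := by
  have hpow : ∀ z : G₀, z ^ q = z ^ (q - 1) * z := fun z => by
    rw [← pow_succ, Nat.sub_add_cancel hq.le]
  rw [mul_comm, pow_mul]
  constructor
  · intro h
    have hxk : x ^ k ≠ 0 := ne_zero_pow (n := q - 1) (by omega) (by rw [h]; exact one_ne_zero)
    have hx : x ≠ 0 := ne_zero_pow hk hxk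
    exact ⟨hx, by rw [hpow, h, one_mul]⟩
  · rintro ⟨hx, h⟩
    exact (mul_eq_right₀ (pow_ne_zero k hx)).mp (by rw [← hpow, h])

namespace CharTwo

variable {F : Type*} [Field F] [CharP F 2] (n : ℕ)

lemma pow_two_pow_eq_or_of_sq_add_mul_add_eq_zero {a b y : F} (ha : a ^ 2 ^ n = a)
    (hb : b ^ 2 ^ n = b) (hy : y ^ 2 + a * y + b = 0) :
    y ^ 2 ^ n = y ∨ y ^ 2 ^ n = y + a := by
  have hy' : (y ^ 2 ^ n) ^ 2 + a * y ^ 2 ^ n + b = 0 := by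
    calc (y ^ 2 ^ n) ^ 2 + a * y ^ 2 ^ n + b = (y ^ 2 + a * y + b) ^ 2 ^ n := by
          rw [add_pow_char_pow, add_pow_char_pow, mul_pow, ha, hb, pow_right_comm]
      _ = 0 := by rw [hy, zero_pow (pow_ne_zero n two_ne_zero)]
  have hroots : (y ^ 2 ^ n + y) * (y ^ 2 ^ n + y + a) = 0 := by
    linear_combination hy' - hy + (y ^ 2 ^ n * y + y ^ 2 + a * y) * (two_eq_zero : (2 : F) = 0)
  rcases mul_eq_zero.mp hroots with h | h
  · exact .inl (CharTwo.add_eq_zero.mp h)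
  · exact .inr (by linear_combination h - (y + a) * (two_eq_zero : (2 : F) = 0))

lemma pow_eq_self_iff_pow_sq_add_one_fixed (y : F) :
    ((y ^ ((2 ^ n) ^ 2 + 1)) ^ 2 ^ n = y ^ ((2 ^ n) ^ 2 + 1) ∧
      ((1 + y) ^ ((2 ^ n) ^ 2 + 1)) ^ 2 ^ n = (1 + y) ^ ((2 ^ n) ^ 2 + 1)) ↔ y ^ 2 ^ n = y := by
  have hsq : ∀ x : F, x ^ (2 ^ n) ^ 2 = (x ^ 2 ^ n) ^ 2 ^ n := fun x => by rw [sq, pow_mul]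
  constructor
  · rintro ⟨hb, hN⟩
    set a := y + y ^ (2 ^ n) ^ 2 with ha_def
    set b := y ^ ((2 ^ n) ^ 2 + 1)
    have hNa : a = (1 + y) ^ ((2 ^ n) ^ 2 + 1) - 1 - b := by
      rw [pow_succ, hsq, add_pow_char_pow, add_pow_char_pow, one_pow, one_pow, ← hsq]
      ring
    have ha : a ^ 2 ^ n = a := by
      rw [hNa, sub_pow_char_pow, sub_pow_char_pow, one_pow, hN, hb]
    have hquad : y ^ 2 + a * y + b = 0 := by
      linear_combination (y ^ 2 + y ^ (2 ^ n) ^ 2 * y) * (two_eq_zero : (2 : F) = 0)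
    have hfix : y ^ 2 ^ n = y ∨ y ^ 2 ^ n = y + a :=
      pow_two_pow_eq_or_of_sq_add_mul_add_eq_zero n ha hb hquad
    have hy2 : y ^ (2 ^ n) ^ 2 = y := by
      rcases hfix with h | h
      · rw [hsq, h, h]
      · rw [hsq, h, add_pow_char_pow, h, ha, CharTwo.add_cancel_right]
    have ha0 : a = 0 := by rw [ha_def, hy2, CharTwo.add_self_eq_zero]
    simpa [ha0] using hfix
  · intro hy
    have hfixed : ∀ (x : F) (k : ℕ), x ^ 2 ^ n = x → (x ^ k) ^ 2 ^ n = x ^ k := fun x k hx => by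
      rw [pow_right_comm, hx]
    exact ⟨hfixed y _ hy, hfixed _ _ (by rw [add_pow_char_pow, one_pow, hy])⟩

end CharTwo

theorem roots_of_unity_intersection_general (n : ℕ) (F : Type) [Field F] [Fintype F]
    (hF : Fintype.card F = (2^n)^4) (y : F) :
    (y ^ ((2^n - 1) * ((2^n)^2 + 1)) = 1 ∧ (1 + y) ^ ((2^n - 1) * ((2^n)^2 + 1)) = 1) ↔
      (y ^ (2^n) = y ∧ y ≠ 0 ∧ y ≠ 1) := by
  have : CharP F 2 := charP_of_card_eq_prime_pow (hF.trans (pow_mul 2 n 4).symm)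
  have hn : n ≠ 0 := by
    rintro rfl
    simpa [hF] using Fintype.one_lt_card (α := F)
  have hroot := pow_sub_one_mul_eq_one_iff (G₀ := F) (Nat.one_lt_two_pow hn)
    (Nat.add_one_ne_zero ((2 ^ n) ^ 2))
  have hy1 : 1 + y ≠ 0 ↔ y ≠ 1 := CharTwo.add_eq_zero.not.trans ne_comm
  rw [hroot, hroot, hy1, ← CharTwo.pow_eq_self_iff_pow_sq_add_one_fixed n y]
  tauto

theorem roots_of_unity_intersection (n : ℕ) (hn : 0 < n) (F : Type) [Field F] [Fintype F]
    (hF : Fintype.card F = (2^n)^4) (y : F) :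
    (y ^ ((2^n - 1) * ((2^n)^2 + 1)) = 1 ∧ (1 + y) ^ ((2^n - 1) * ((2^n)^2 + 1)) = 1) ↔
      (y ^ (2^n) = y ∧ y ≠ 0 ∧ y ≠ 1) :=
  roots_of_unity_intersection_general n F hF y
end

section
/- Let q = 2^n, F = GF(q^4), d = q^3 + q^2 + q - 1, and suppose x ∈ F satisfies x^d + (x+1)^d = b with b ∈ GF(q^2) \ {1}. Then (1 + 1/x)^{(q-1)(q^2+1)} = 1, i.e., 1 + 1/x is a (q-1)(q^2+1)-st root of unity in F. -/
theorem solution_gives_root_of_unity (n : ℕ) (hn : 0 < n) (F : Type) [Field F] [Fintype F]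
    (hF : Fintype.card F = (2^n)^4) (b x : F) (hb : b ^ ((2^n)^2) = b) (hb1 : b ≠ 1)
    (hx : x ^ ((2^n)^3 + (2^n)^2 + 2^n - 1) + (x + 1) ^ ((2^n)^3 + (2^n)^2 + 2^n - 1) = b) :
    (1 + x⁻¹) ^ ((2^n - 1) * ((2^n)^2 + 1)) = 1 := by
  have hq1 : 1 ≤ 2 ^ n := Nat.one_le_two_pow
  set Q := 2 ^ n with hQdef
  obtain ⟨r, hr⟩ : ∃ r, Q = r + 1 := ⟨Q - 1, by omega⟩
  -- characteristic 2
  have hcard : ((Fintype.card F : ℕ) : F) = 0 := FiniteField.cast_card_eq_zero F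
  rw [hF] at hcard
  push_cast at hcard
  have hQ0 : ((Q : ℕ) : F) = 0 := (pow_eq_zero_iff (by norm_num : (4:ℕ) ≠ 0)).mp hcard
  have h2 : (2 : F) = 0 := by
    rw [hQdef] at hQ0
    push_cast at hQ0
    exact (pow_eq_zero_iff hn.ne').mp hQ0
  haveI : CharP F 2 := CharTwo.of_one_ne_zero_of_two_eq_zero one_ne_zero h2
  haveI : Fact (Nat.Prime 2) := ⟨Nat.prime_two⟩
  -- clean up the exponent D
  have hD : Q ^ 3 + Q ^ 2 + Q - 1 = Q ^ 3 + Q ^ 2 + r := by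
    generalize Q ^ 3 + Q ^ 2 = A
    omega
  rw [hD] at hx
  have hQpos : 0 < Q := by omega
  have hDpos : 0 < Q ^ 3 + Q ^ 2 + r := by
    have := pow_pos hQpos 3
    omega
  -- Frobenius facts
  have h4 : ∀ a : F, a ^ (Q ^ 4) = a := fun a => by rw [← hF]; exact FiniteField.pow_card a
  have frob : ∀ a c : F, (a + c) ^ (Q ^ 2) = a ^ (Q ^ 2) + c ^ (Q ^ 2) := by
    intro a c
    have hQ2 : Q ^ 2 = 2 ^ (n * 2) := by rw [hQdef, pow_mul]
    rw [hQ2]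
    exact add_pow_char_pow a c 2 (n * 2)
  have frobQ : ∀ a c : F, (a + c) ^ Q = a ^ Q + c ^ Q := by
    intro a c
    have hQ1 : Q = 2 ^ (n * 1) := by rw [hQdef, pow_mul, pow_one]
    rw [hQ1]
    exact add_pow_char_pow a c 2 (n * 1)
  -- x ≠ 0 and x + 1 ≠ 0
  have hx0 : x ≠ 0 := by
    intro h
    apply hb1
    rw [h] at hx
    simpa [zero_pow hDpos.ne'] using hx.symm
  have hv0 : x + 1 ≠ 0 := by
    intro h
    apply hb1
    have hx1 : x = 1 := by
      have h' := eq_neg_of_add_eq_zero_left h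
      rwa [CharTwo.neg_eq] at h'
    rw [hx1] at hx
    rw [CharTwo.add_self_eq_zero (1 : F)] at hx
    simpa [zero_pow hDpos.ne'] using hx.symm
  -- reduction of the Frobenius-twisted exponent
  have hred : ∀ a : F, a ≠ 0 →
      a ^ (Q ^ 2 * (Q ^ 3 + Q ^ 2 + r)) = a ^ (Q ^ 2 * r + r + 2) := by
    intro a ha
    apply mul_right_cancel₀ (pow_ne_zero (Q ^ 2) ha)
    rw [← pow_add a (Q ^ 2 * (Q ^ 3 + Q ^ 2 + r)) (Q ^ 2),
      ← pow_add a (Q ^ 2 * r + r + 2) (Q ^ 2)]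
    have e1 : Q ^ 2 * (Q ^ 3 + Q ^ 2 + r) + Q ^ 2 = Q ^ 4 * Q + Q ^ 4 + Q ^ 3 := by
      rw [hr]; ring
    have e2 : Q ^ 2 * r + r + 2 + Q ^ 2 = Q ^ 3 + Q + 1 := by
      rw [hr]; ring
    rw [e1, e2, pow_add a (Q ^ 4 * Q + Q ^ 4) (Q ^ 3), pow_add a (Q ^ 4 * Q) (Q ^ 4),
      pow_mul a (Q ^ 4) Q, h4 a, pow_add a (Q ^ 3 + Q) 1, pow_add a (Q ^ 3) Q, pow_one]
    ring
  -- the twisted equation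
  have hE1 : x ^ (Q ^ 2 * r + r + 2) + (x + 1) ^ (Q ^ 2 * r + r + 2) = b := by
    have h := congrArg (· ^ (Q ^ 2)) hx
    rw [frob (x ^ (Q ^ 3 + Q ^ 2 + r)) ((x + 1) ^ (Q ^ 3 + Q ^ 2 + r)),
      ← pow_mul x (Q ^ 3 + Q ^ 2 + r) (Q ^ 2), ← pow_mul (x + 1) (Q ^ 3 + Q ^ 2 + r) (Q ^ 2),
      mul_comm (Q ^ 3 + Q ^ 2 + r) (Q ^ 2), hred x hx0, hred (x + 1) hv0, hb] at h
    exact h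
  by_cases hs : x ^ (Q ^ 2) + x = 0
  · -- x lies in GF(q^2): contradiction with b ≠ 1
    exfalso
    apply hb1
    have hxq : x ^ (Q ^ 2) = x := by
      have h' := eq_neg_of_add_eq_zero_left hs
      rwa [CharTwo.neg_eq] at h'
    have hvq : (x + 1) ^ (Q ^ 2) = x + 1 := by rw [frob, one_pow, hxq]
    have exE : ∀ a : F, a ^ (Q ^ 2) = a → a ^ (Q ^ 2 * r + r + 2) = (a ^ Q) ^ 2 := by
      intro a haq
      rw [pow_add a (Q ^ 2 * r + r) 2, pow_add a (Q ^ 2 * r) r, pow_mul a (Q ^ 2) r,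
        haq, hr]
      ring
    have hb2 : b = ((x + (x + 1)) ^ Q) ^ 2 := by
      rw [← hE1, exE x hxq, exE _ hvq, frobQ x (x + 1), CharTwo.add_sq]
    have hone : x + (x + 1) = 1 := by
      calc x + (x + 1) = (x + x) + 1 := by ring
        _ = 1 := by rw [CharTwo.add_self_eq_zero, zero_add]
    rw [hb2, hone, one_pow, one_pow]
  · -- main case
    have hveq : (x + 1) ^ (Q ^ 2) = x ^ (Q ^ 2) + 1 := by rw [frob, one_pow]
    have hshift : ∀ a : F, a ^ (Q ^ 3 + Q ^ 2 + r) * a ^ 2 =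
        a ^ (Q ^ 2 * r + r + 2) * (a ^ (Q ^ 2)) ^ 2 := by
      intro a
      rw [← pow_add a (Q ^ 3 + Q ^ 2 + r) 2, ← pow_mul a (Q ^ 2) 2,
        ← pow_add a (Q ^ 2 * r + r + 2) (Q ^ 2 * 2)]
      congr 1
      rw [hr]; ring
    have hbb : (x ^ (Q ^ 3 + Q ^ 2 + r) + (x + 1) ^ (Q ^ 3 + Q ^ 2 + r)) +
        (x ^ (Q ^ 2 * r + r + 2) + (x + 1) ^ (Q ^ 2 * r + r + 2)) = 0 := by
      rw [hx, hE1]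
      exact CharTwo.add_self_eq_zero b
    have hsym : x ^ (Q ^ 3 + Q ^ 2 + r) + x ^ (Q ^ 2 * r + r + 2) =
        (x + 1) ^ (Q ^ 3 + Q ^ 2 + r) + (x + 1) ^ (Q ^ 2 * r + r + 2) := by
      rw [← sub_eq_zero, CharTwo.sub_eq_add]
      linear_combination hbb
    have hshiftx := hshift x
    have hshiftv := hshift (x + 1)
    rw [hveq] at hshiftv
    set A := x ^ (Q ^ 2) with hA
    set X := x ^ (Q ^ 2 * r + r + 2) with hX
    set V := (x + 1) ^ (Q ^ 2 * r + r + 2) with hV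
    set XD := x ^ (Q ^ 3 + Q ^ 2 + r) with hXD
    set VD := (x + 1) ^ (Q ^ 3 + Q ^ 2 + r) with hVD
    have key : X * (x + 1) ^ 2 = V * x ^ 2 := by
      apply mul_left_cancel₀ (pow_ne_zero 2 hs)
      calc (A + x) ^ 2 * (X * (x + 1) ^ 2)
          = X * A ^ 2 * (x + 1) ^ 2 + X * x ^ 2 * (x + 1) ^ 2 := by
            linear_combination (X * (x + 1) ^ 2 * A * x) * h2
        _ = (XD * x ^ 2) * (x + 1) ^ 2 + X * x ^ 2 * (x + 1) ^ 2 := by rw [hshiftx]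
        _ = x ^ 2 * (x + 1) ^ 2 * (XD + X) := by ring
        _ = x ^ 2 * (x + 1) ^ 2 * (VD + V) := by rw [hsym]
        _ = (VD * (x + 1) ^ 2) * x ^ 2 + V * (x + 1) ^ 2 * x ^ 2 := by ring
        _ = V * (A + 1) ^ 2 * x ^ 2 + V * (x + 1) ^ 2 * x ^ 2 := by rw [hshiftv]
        _ = (A + x) ^ 2 * (V * x ^ 2) := by
            linear_combination (V * x ^ 2 * (A + x + 1 - A * x)) * h2
    -- conclude
    have hQr : Q - 1 = r := by omega
    rw [hQr]
    rw [hX] at key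
    rw [hV] at key
    have hMe : Q ^ 2 * r + r + 2 = r * (Q ^ 2 + 1) + 2 := by ring
    rw [hMe, pow_add x (r * (Q ^ 2 + 1)) 2, pow_add (x + 1) (r * (Q ^ 2 + 1)) 2] at key
    have hMeq : x ^ (r * (Q ^ 2 + 1)) = (x + 1) ^ (r * (Q ^ 2 + 1)) := by
      apply mul_right_cancel₀ (mul_ne_zero (pow_ne_zero 2 hx0) (pow_ne_zero 2 hv0))
      linear_combination key
    have h1x : 1 + x⁻¹ = (x + 1) * x⁻¹ := by field_simp
    rw [h1x, mul_pow, ← hMeq, ← mul_pow, mul_inv_cancel₀ hx0, one_pow]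
end

section
/- Let q = 2^n, F = GF(q^4), and z ∈ F with z^{(q-1)(q^2+1)} = 1 and z ≠ 1. For x = 1/(1+z), the element x^d + (x+1)^d (with d = q^3 + q^2 + q - 1) equals (1+z)^{-(q-1)(q^2+1)}. -/
lemma nat_aux (q : ℕ) (hq : 1 ≤ q) :
    (q - 1) * (q ^ 2 + 1) + 2 * q ^ 2 = q ^ 3 + q ^ 2 + q - 1 := by
  obtain ⟨m, rfl⟩ : ∃ m, q = m + 1 := ⟨q - 1, by omega⟩
  simp only [Nat.add_sub_cancel]
  have : (m + 1) ^ 3 + (m + 1) ^ 2 + (m + 1) - 1 = (m + 1) ^ 3 + (m + 1) ^ 2 + m := by omega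
  rw [this]; ring

theorem value_at_inv_one_add_z (n : ℕ) (hn : 0 < n) (F : Type) [Field F] [Fintype F]
    (hF : Fintype.card F = (2^n)^4) (z : F) (hz : z ^ ((2^n - 1) * ((2^n)^2 + 1)) = 1)
    (hz1 : z ≠ 1) :
    (1 + z)⁻¹ ^ ((2^n)^3 + (2^n)^2 + 2^n - 1)
      + ((1 + z)⁻¹ + 1) ^ ((2^n)^3 + (2^n)^2 + 2^n - 1)
      = ((1 + z) ^ ((2^n - 1) * ((2^n)^2 + 1)))⁻¹ := by
  have h2 : CharP F 2 := by
    haveI := ringChar.charP F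
    obtain ⟨m, hp, hcard⟩ := FiniteField.card F (ringChar F)
    have hdvd1 : ringChar F ∣ 2 ^ (n * 4) := by
      rw [pow_mul, ← hF, hcard]
      exact dvd_pow_self _ m.ne_zero
    have hdvd : ringChar F ∣ 2 := hp.dvd_of_dvd_pow hdvd1
    have h : ringChar F = 2 := (Nat.prime_dvd_prime_iff_eq hp Nat.prime_two).mp hdvd
    exact h ▸ ringChar.charP F
  haveI := h2
  have hfrob : (1 + z) ^ (2^n) ^ 2 = 1 + z ^ (2^n) ^ 2 := by
    have h : ((2:ℕ)^n) ^ 2 = 2 ^ (n * 2) := by rw [← pow_mul]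
    rw [h, add_pow_char_pow, one_pow]
  have hq2 : (2:ℕ) ≤ 2 ^ n := Nat.one_lt_two_pow (by omega)
  generalize hqdef : (2:ℕ) ^ n = q at hz hq2 hfrob ⊢
  have hnat := nat_aux q (by omega)
  set d := q ^ 3 + q ^ 2 + q - 1 with hd
  set e := (q - 1) * (q ^ 2 + 1) with he
  have hu : (1 : F) + z ≠ 0 := by
    intro h
    apply hz1
    have : z = -1 := by linear_combination h
    rw [this, CharTwo.neg_eq]
  have hx1 : (1 + z)⁻¹ + 1 = z * (1 + z)⁻¹ := by
    field_simp
    linear_combination (CharTwo.add_self_eq_zero (1:F))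
  have hzd : z ^ d = z ^ (2 * q ^ 2) := by
    rw [← hnat, pow_add, hz, one_mul]
  have key : (1:F) + z ^ d = (1 + z) ^ (2 * q ^ 2) := by
    rw [hzd, mul_comm 2 (q^2), pow_mul, pow_mul, hfrob, CharTwo.add_sq, one_pow]
  have hdd : ((1:F) + z) ^ d = (1 + z) ^ e * (1 + z) ^ (2 * q ^ 2) := by
    rw [← pow_add, hnat]
  rw [hx1, mul_pow, inv_pow]
  calc ((1+z)^d)⁻¹ + z^d * ((1+z)^d)⁻¹ = (1 + z^d) * ((1+z)^d)⁻¹ := by ring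
    _ = (1+z)^(2*q^2) * ((1+z)^e * (1+z)^(2*q^2))⁻¹ := by rw [key, hdd]
    _ = ((1+z)^e)⁻¹ := by
        field_simp
end

section
/- Let q = 2^n, F = GF(q^4), and t ∈ F with t^{q^2+1} = 1, t ≠ 1 and z ∈ F with z^{q-1} = 1. Then (1+zt)^{(q-1)(q^2+1)} = (z + z^{-1} + t + t^{-1})^{q-1}. -/
/-! Write `Q = q²`. In characteristic 2 the `Q`-th power is additive, and `z ↦ z^Q` fixes `z`
(as `z^q = z`) while it inverts `t` (as `t^(Q+1) = 1`). Hence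
`(1 + z t)^(Q+1) = (1 + z t⁻¹)(1 + z t) = z (z + z⁻¹ + t + t⁻¹)`,
and raising to the power `q - 1` kills the factor `z`. -/

theorem one_add_mul_pow_expChar_pow_succ {F : Type*} [Field F] {p : ℕ} [ExpChar F p] (k : ℕ)
    {z t : F} (hz0 : z ≠ 0) (ht0 : t ≠ 0) (hz : z ^ p ^ k = z) (ht : t ^ p ^ k = t⁻¹) :
    (1 + z * t) ^ (p ^ k + 1) = z * (z + z⁻¹ + t + t⁻¹) := by
  rw [pow_succ, add_pow_expChar_pow, one_pow, mul_pow, hz, ht]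
  field_simp
  ring

theorem power_identity_zt_general (n : ℕ) (hn : 0 < n) (F : Type) [Field F] [Fintype F]
    (hF : Fintype.card F = (2^n)^4) (z t : F)
    (ht : t ^ ((2^n)^2 + 1) = 1) (hz : z ^ (2^n - 1) = 1) :
    (1 + z * t) ^ ((2^n - 1) * ((2^n)^2 + 1)) = (z + z⁻¹ + t + t⁻¹) ^ (2^n - 1) := by
  have : CharP F 2 := charP_of_card_eq_prime_pow (f := n * 4) (by rw [hF, pow_mul])
  have hq : 2 ^ n - 1 ≠ 0 := Nat.sub_ne_zero_of_lt (Nat.one_lt_two_pow hn.ne')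
  have hQ : (2 ^ n) ^ 2 = 2 ^ (2 * n) := by rw [← pow_mul, mul_comm]
  have hz0 : z ≠ 0 := (IsUnit.of_pow_eq_one hz hq).ne_zero
  have ht0 : t ≠ 0 := (IsUnit.of_pow_eq_one ht (Nat.succ_ne_zero _)).ne_zero
  have hzq : z ^ 2 ^ n = z := by
    rw [← pow_sub_one_mul (pow_ne_zero n two_ne_zero), hz, one_mul]
  have hzQ : z ^ 2 ^ (2 * n) = z := by rw [← hQ, pow_two, pow_mul, hzq, hzq]
  have htQ : t ^ 2 ^ (2 * n) = t⁻¹ := eq_inv_of_mul_eq_one_left (by rwa [← hQ, ← pow_succ])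
  rw [mul_comm (2 ^ n - 1), pow_mul, hQ, one_add_mul_pow_expChar_pow_succ _ hz0 ht0 hzQ htQ,
    mul_pow, hz, one_mul]

theorem power_identity_zt (n : ℕ) (hn : 0 < n) (F : Type) [Field F] [Fintype F]
    (hF : Fintype.card F = (2^n)^4) (z t : F)
    (ht : t ^ ((2^n)^2 + 1) = 1) (ht1 : t ≠ 1) (hz : z ^ (2^n - 1) = 1) :
    (1 + z * t) ^ ((2^n - 1) * ((2^n)^2 + 1)) = (z + z⁻¹ + t + t⁻¹) ^ (2^n - 1) :=
  power_identity_zt_general n hn F hF z t ht hz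
end

section
/- Let q = 2^n, F = GF(q^4), and let z, λ, t be elements of F with z^{q-1}=1, λ^{q+1}=1, t^{q^2+1}=1 and 1 + zλt ≠ 0. Then 1 + (zλt)^{q^3+q^2+q-1} = (1 + z λ^{-1} t^{-1})^2. -/
theorem one_add_pow_d_identity (n : ℕ) (hn : 0 < n) (F : Type) [Field F] [Fintype F]
    (hF : Fintype.card F = (2^n)^4) (z lam t : F)
    (hz : z ^ (2^n - 1) = 1) (hlam : lam ^ (2^n + 1) = 1) (ht : t ^ ((2^n)^2 + 1) = 1)
    (h0 : 1 + z * lam * t ≠ 0) :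
    1 + (z * lam * t) ^ ((2^n)^3 + (2^n)^2 + 2^n - 1) = (1 + z * lam⁻¹ * t⁻¹) ^ 2 := by
  set q := 2^n with hq
  have hq2 : 2 ≤ q := by
    have : 2^1 ≤ 2^n := Nat.pow_le_pow_right (by norm_num) hn
    simpa using this
  have hz0 : z ≠ 0 := by
    intro h; rw [h, zero_pow (by omega)] at hz; exact one_ne_zero hz.symm
  have hl0 : lam ≠ 0 := by
    intro h; rw [h, zero_pow (by omega)] at hlam; exact one_ne_zero hlam.symm
  have ht0 : t ≠ 0 := by
    intro h; rw [h, zero_pow (by positivity)] at ht; exact one_ne_zero ht.symm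
  have h2 : (2 : F) = 0 := by
    have hc := FiniteField.cast_card_eq_zero F
    rw [hF] at hc
    rw [hq] at hc
    push_cast at hc
    have h4 : (2 : F) ^ (n * 4) = 0 := by rw [pow_mul]; exact hc
    exact pow_eq_zero_iff (by omega : n * 4 ≠ 0) |>.mp h4
  have hzq : z ^ q = z := by
    calc z ^ q = z ^ (q - 1) * z := by rw [← pow_succ]; congr 1; omega
    _ = z := by rw [hz, one_mul]
  have hlq : lam ^ q = lam⁻¹ := by
    have h1 : lam ^ q * lam = 1 := by rw [← pow_succ]; exact hlam
    field_simp at h1 ⊢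
    linear_combination h1
  have htq2 : t ^ (q ^ 2) = t⁻¹ := by
    have h1 : t ^ (q ^ 2) * t = 1 := by rw [← pow_succ]; exact ht
    field_simp at h1 ⊢
    linear_combination h1
  have hzq2 : z ^ (q ^ 2) = z := by rw [sq, pow_mul, hzq, hzq]
  have hlq2 : lam ^ (q ^ 2) = lam := by rw [sq, pow_mul, hlq, inv_pow, hlq, inv_inv]
  have hq3 : q ^ 3 = q ^ 2 * q := by ring
  have hzq3 : z ^ (q ^ 3) = z := by rw [hq3, pow_mul, hzq2, hzq]
  have hlq3 : lam ^ (q ^ 3) = lam⁻¹ := by rw [hq3, pow_mul, hlq2, hlq]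
  have htq3 : t ^ (q ^ 3) = (t ^ q)⁻¹ := by rw [hq3, pow_mul, htq2, inv_pow]
  have hu : z * lam * t ≠ 0 := mul_ne_zero (mul_ne_zero hz0 hl0) ht0
  have htq0 : t ^ q ≠ 0 := pow_ne_zero _ ht0
  have key : (z * lam * t) ^ (q ^ 3 + q ^ 2 + q)
      = (z * lam * t) * (z * lam⁻¹ * t⁻¹) ^ 2 := by
    rw [pow_add, pow_add, mul_pow, mul_pow, mul_pow, mul_pow, mul_pow, mul_pow,
      hzq3, hlq3, htq3, hzq2, hlq2, htq2, hzq, hlq]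
    field_simp
  have hd : q ^ 3 + q ^ 2 + q - 1 + 1 = q ^ 3 + q ^ 2 + q := by
    have : 2 ≤ q := hq2
    omega
  have hcanc : (z * lam * t) ^ (q ^ 3 + q ^ 2 + q - 1) * (z * lam * t)
      = (z * lam⁻¹ * t⁻¹) ^ 2 * (z * lam * t) := by
    rw [← pow_succ, hd, key]; ring
  have h1 := mul_right_cancel₀ hu hcanc
  rw [h1, add_sq, h2]
  ring
end

section
/- Let q = 2^n, F = GF(q^4), c ∈ F \ GF(q^2), and set γ = c/(c + c^{q^2}). Then γ^{q^2} = 1 + γ and Tr_{GF(q)}^{F}(γ^{q+1}) = 1, i.e., γ^{q+1} + (γ^{q+1})^q + (γ^{q+1})^{q^2} + (γ^{q+1})^{q^3} = 1. -/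
theorem gamma_properties (n : ℕ) (hn : 0 < n) (F : Type) [Field F] [Fintype F]
    (hF : Fintype.card F = (2^n)^4) (c : F) (hc : c + c ^ ((2^n)^2) ≠ 0) :
    (c / (c + c ^ ((2^n)^2))) ^ ((2^n)^2) = 1 + c / (c + c ^ ((2^n)^2)) ∧
    (c / (c + c ^ ((2^n)^2))) ^ (2^n + 1)
      + ((c / (c + c ^ ((2^n)^2))) ^ (2^n + 1)) ^ (2^n)
      + ((c / (c + c ^ ((2^n)^2))) ^ (2^n + 1)) ^ ((2^n)^2)
      + ((c / (c + c ^ ((2^n)^2))) ^ (2^n + 1)) ^ ((2^n)^3) = 1 := by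
  -- characteristic 2
  have hp2 : Fact (Nat.Prime 2) := ⟨Nat.prime_two⟩
  have hchar : CharP F 2 := by
    have h1 : (Fintype.card F : F) = 0 := FiniteField.cast_card_eq_zero F
    have h2 : ringChar F ∣ (2^n)^4 := by
      rw [← hF]
      exact (ringChar.spec F (Fintype.card F)).mp h1
    have hprime : (ringChar F).Prime := CharP.char_is_prime F (ringChar F)
    have hd2 : ringChar F ∣ 2 := by
      have : ringChar F ∣ 2 ^ (n * 4) := by rwa [pow_mul]
      exact hprime.dvd_of_dvd_pow this
    have : ringChar F = 2 := (Nat.prime_dvd_prime_iff_eq hprime Nat.prime_two).mp hd2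
    rw [← this]; exact ringChar.charP F
  set q := 2 ^ n with hq
  set s := c + c ^ (q ^ 2) with hs
  set γ := c / s with hγ
  have hadd : ∀ (x y : F) (k : ℕ), (x + y) ^ (q ^ k) = x ^ (q ^ k) + y ^ (q ^ k) := by
    intro x y k
    have : q ^ k = 2 ^ (n * k) := by rw [hq, pow_mul]
    rw [this, add_pow_char_pow]
  have h2 : (2 : F) = 0 := by
    have := hchar.cast_eq_zero; exact_mod_cast this
  have hcq4 : c ^ (q ^ 4) = c := by rw [hq, ← hF]; exact FiniteField.pow_card c
  -- s is fixed by x ↦ x^(q^2)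
  have hsfix : s ^ (q ^ 2) = s := by
    rw [hs, hadd c (c ^ q ^ 2) 2]
    rw [show (c ^ q ^ 2) ^ q ^ 2 = c ^ (q ^ 2 * q ^ 2) from (pow_mul c (q^2) (q^2)).symm]
    rw [show q ^ 2 * q ^ 2 = q ^ 4 by ring, hcq4, add_comm]
  -- Part 1
  have hγ2 : γ ^ (q ^ 2) = 1 + γ := by
    rw [hγ, div_pow, hsfix]
    field_simp
    linear_combination (-c) * h2
  have hγ4 : γ ^ (q ^ 4) = γ := by rw [hq, ← hF]; exact FiniteField.pow_card γ
  have hγ3 : γ ^ (q ^ 3) = 1 + γ ^ q := by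
    rw [show q ^ 3 = q ^ 2 * q by ring, pow_mul, hγ2]
    have := hadd 1 γ 1
    rw [pow_one] at this
    rw [this, one_pow]
  refine ⟨hγ2, ?_⟩
  have e1 : γ ^ (q + 1) = γ ^ q * γ := pow_succ γ q
  have e2 : (γ ^ (q + 1)) ^ q = (1 + γ) * γ ^ q := by
    rw [e1, mul_pow, ← pow_mul, show q * q = q ^ 2 from (sq q).symm, hγ2]
  have e3 : (γ ^ (q + 1)) ^ (q ^ 2) = (1 + γ ^ q) * (1 + γ) := by
    rw [e1, mul_pow, ← pow_mul, show q * q ^ 2 = q ^ 3 by ring, hγ3, hγ2]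
  have e4 : (γ ^ (q + 1)) ^ (q ^ 3) = γ * (1 + γ ^ q) := by
    rw [e1, mul_pow, ← pow_mul, show q * q ^ 3 = q ^ 4 by ring, hγ4, hγ3]
  rw [e2, e3, e4, e1]
  linear_combination (γ + γ ^ q + 2 * γ * γ ^ q) * h2
end
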